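/- Fix $d \geq 2$ and let $h(a) = \theta_{d-1}\int_0^a (1-y^2)^{(d-1)/2}\,dy$ for $a \in [0,1]$. Let $j \in \mathbb{Z}_{\geq 0}$, $\alpha_0 > 0$ and $\varepsilon \in (0,1)$. Then as $s \to \infty$, $$\theta_{d-1}\int_0^1 e^{-s h(a)} (\alpha_0 + h(a))^{j} \Big(1 + \frac{j}{s(\alpha_0 + h(a))}\Big)\, da = \alpha_0^{j} s^{-1} + 2 j \alpha_0^{j-1} s^{-2} + O(s^{\varepsilon-3}).$$ -/

import Mathlib

open MeasureTheory Metric Set Real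

/-- θ_n, the Lebesgue volume of the unit Euclidean ball in ℝ^n. -/
noncomputable def ubv (n : ℕ) : ℝ :=
  (volume (Metric.ball (0 : EuclideanSpace ℝ (Fin n)) 1)).toReal

/-- The slab-volume function `h(a) = θ_{d-1} ∫_0^a (1-y²)^{(d-1)/2} dy`. -/
noncomputable def hSlab (d : ℕ) (a : ℝ) : ℝ :=
  ubv (d-1) * ∫ y in (0:ℝ)..a, (1 - y^2) ^ (((d:ℝ) - 1)/2)

/-!
Write `h = θ H` with `H(a) = ∫₀^a w`, `w(y) = (1 - y²)^p`, and
`g_s(t) = ((α + t)^j + (j/s) (α + t)^{j-1}) e^{-st}`, so that the integrand is `g_s(h(a))`.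
The substitution `t = h(a)` gives
`θ ∫₀¹ g_s(h(a)) da = ∫₀^{h(1)} g_s(t) dt + ∫₀¹ θ (1 - w(a)) g_s(h(a)) da`.
Since `0 ≤ 1 - w(a) = O(a²)` and `h(a) ≥ c a`, the second integral is
`O(∫₀¹ a² e^{-sca} da) = O(s⁻³)`. Two integrations by parts expand the first one as
`α^j/s + 2 j α^{j-1}/s² + O(s⁻³)`, the boundary terms at `h(1) > 0` being exponentially small.
So the error is in fact `O(s⁻³)`.
-/

open Asymptotics Filter

theorem hasDerivAt_exp_neg_mul (s t : ℝ) :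
    HasDerivAt (fun t => exp (-(s * t))) (-s * exp (-(s * t))) t := by
  convert ((hasDerivAt_id' t).const_mul s).fun_neg.exp using 1
  ring

theorem hasDerivAt_neg_exp_neg_mul_div {s : ℝ} (hs : s ≠ 0) (t : ℝ) :
    HasDerivAt (fun t => -exp (-(s * t)) / s) (exp (-(s * t))) t :=
  ((hasDerivAt_exp_neg_mul s t).fun_neg.div_const s).congr_deriv (by field_simp)

theorem integral_exp_neg_mul_le {c : ℝ} (hc : 0 < c) (b : ℝ) :
    ∫ t in (0:ℝ)..b, exp (-(c * t)) ≤ 1 / c := by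
  rw [intervalIntegral.integral_eq_sub_of_hasDerivAt
    (fun t _ => hasDerivAt_neg_exp_neg_mul_div hc.ne' t)
    (by apply Continuous.intervalIntegrable; fun_prop)]
  simp only [mul_zero, neg_zero, exp_zero]
  rw [div_sub_div_same]
  gcongr
  linarith [exp_nonneg (-(c * b))]

noncomputable def laplacePow (s α T : ℝ) (n : ℕ) : ℝ :=
  ∫ t in (0:ℝ)..T, (α + t) ^ n * exp (-(s * t))

theorem laplacePow_eq {s : ℝ} (hs : s ≠ 0) (α T : ℝ) (n : ℕ) :
    laplacePow s α T n = α ^ n / s - (α + T) ^ n * exp (-(s * T)) / s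
      + n / s * laplacePow s α T (n - 1) := by
  have hu : ∀ t ∈ uIcc 0 T, HasDerivAt (fun t => (α + t) ^ n) (n * (α + t) ^ (n - 1)) t :=
    fun t _ => by simpa using ((hasDerivAt_id t).const_add α).fun_pow n
  rw [laplacePow, intervalIntegral.integral_mul_deriv_eq_deriv_mul hu
    (fun t _ => hasDerivAt_neg_exp_neg_mul_div hs t)
    (by apply Continuous.intervalIntegrable; fun_prop)
    (by apply Continuous.intervalIntegrable; fun_prop), laplacePow,
    ← intervalIntegral.integral_const_mul]
  have hrest : ∫ t in (0:ℝ)..T, ↑n * (α + t) ^ (n - 1) * (-exp (-(s * t)) / s)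
      = -∫ t in (0:ℝ)..T, ↑n / s * ((α + t) ^ (n - 1) * exp (-(s * t))) := by
    rw [← intervalIntegral.integral_neg]
    congr 1 with t
    ring
  rw [hrest]
  simp only [mul_zero, neg_zero, exp_zero, add_zero]
  ring

theorem abs_laplacePow_le {s : ℝ} (hs : 0 < s) (α : ℝ) {T : ℝ} (hT : 0 ≤ T) (n : ℕ) :
    |laplacePow s α T n| ≤ (|α| + T) ^ n / s := by
  calc |laplacePow s α T n|
      ≤ ∫ t in (0:ℝ)..T, (|α| + T) ^ n * exp (-(s * t)) := by
        refine (intervalIntegral.abs_integral_le_integral_abs hT).trans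
          (intervalIntegral.integral_mono_on hT (by apply Continuous.intervalIntegrable; fun_prop)
            (by apply Continuous.intervalIntegrable; fun_prop) fun t ht => ?_)
        rw [abs_mul, abs_pow, abs_exp]
        gcongr
        exact (abs_add_le α t).trans (by rw [abs_of_nonneg ht.1]; linarith [ht.2])
    _ ≤ (|α| + T) ^ n * (1 / s) := by
        rw [intervalIntegral.integral_const_mul]
        gcongr
        exact integral_exp_neg_mul_le hs T
    _ = (|α| + T) ^ n / s := by ring

theorem isBigO_exp_neg_mul_atTop {T : ℝ} (hT : 0 < T) (k : ℕ) :
    (fun s => exp (-(s * T))) =O[atTop] fun s => s⁻¹ ^ k :=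
  ((isLittleO_pow_exp_pos_mul_atTop k hT).isBigO.inv_rev
    ((eventually_ne_atTop 0).mono fun s hs h => absurd h (pow_ne_zero k hs))).congr
    (fun s => by rw [← exp_neg, mul_comm]) (fun s => (inv_pow s k).symm)

theorem isBigO_laplacePow (α : ℝ) {T : ℝ} (hT : 0 ≤ T) (n : ℕ) :
    (fun s => laplacePow s α T n) =O[atTop] fun s => s⁻¹ := by
  refine IsBigO.of_bound ((|α| + T) ^ n) ((eventually_gt_atTop 0).mono fun s hs => ?_)
  rw [norm_eq_abs, norm_eq_abs, abs_inv, abs_of_pos hs, ← div_eq_mul_inv]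
  exact abs_laplacePow_le hs α hT n

theorem isBigO_laplacePow_sub (α : ℝ) {T : ℝ} (hT : 0 < T) (n : ℕ) :
    (fun s => laplacePow s α T n - α ^ n / s) =O[atTop] fun s => s⁻¹ ^ 2 := by
  have hexp := ((isBigO_exp_neg_mul_atTop hT 1).const_mul_left (-(α + T) ^ n)).mul
    (isBigO_refl (fun s : ℝ => s⁻¹) atTop)
  have hrec := ((isBigO_laplacePow α hT.le (n - 1)).const_mul_left (n : ℝ)).mul
    (isBigO_refl (fun s : ℝ => s⁻¹) atTop)
  refine (hexp.add (hrec.congr_right fun s => by ring)).congr' ?_ (by simp [sq])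
  filter_upwards [eventually_ne_atTop 0] with s hs
  rw [laplacePow_eq hs α T n]
  ring

theorem isBigO_laplacePow_add_sub (α : ℝ) {T : ℝ} (hT : 0 < T) (j : ℕ) :
    (fun s => laplacePow s α T j + j / s * laplacePow s α T (j - 1)
      - (α ^ j / s + 2 * j * α ^ (j - 1) / s ^ 2)) =O[atTop] fun s => s⁻¹ ^ 3 := by
  have hexp := ((isBigO_exp_neg_mul_atTop hT 2).const_mul_left (-(α + T) ^ j)).mul
    (isBigO_refl (fun s : ℝ => s⁻¹) atTop)
  have hrec := ((isBigO_laplacePow_sub α hT (j - 1)).const_mul_left (2 * j : ℝ)).mul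
    (isBigO_refl (fun s : ℝ => s⁻¹) atTop)
  refine (hexp.add hrec).congr' ?_ (by simp [pow_succ])
  filter_upwards [eventually_ne_atTop 0] with s hs
  rw [laplacePow_eq hs α T j]
  ring

theorem abs_one_sub_one_sub_rpow_le {p x : ℝ} (hp : 0 ≤ p) (hx0 : 0 ≤ x) (hx1 : x ≤ 1) :
    |1 - (1 - x) ^ p| ≤ max p 1 * x := by
  rw [abs_of_nonneg (sub_nonneg.2 (rpow_le_one (by linarith) (by linarith) hp))]
  rcases le_total 1 p with h1 | h1
  · have bernoulli := one_add_mul_self_le_rpow_one_add (by linarith : -1 ≤ -x) h1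
    rw [← sub_eq_add_neg] at bernoulli
    rw [max_eq_left h1]
    linarith
  · have := rpow_le_rpow_of_exponent_ge' (x := 1 - x) (by linarith) (by linarith) hp h1
    rw [rpow_one] at this
    rw [max_eq_right h1]
    linarith

theorem continuous_one_sub_sq_rpow {p : ℝ} (hp : 0 ≤ p) :
    Continuous fun y : ℝ => (1 - y ^ 2) ^ p :=
  (by fun_prop : Continuous fun y : ℝ => 1 - y ^ 2).rpow_const fun _ => Or.inr hp

noncomputable def slabProfile (p a : ℝ) : ℝ :=
  ∫ y in (0:ℝ)..a, (1 - y ^ 2) ^ p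

theorem hasDerivAt_slabProfile {p : ℝ} (hp : 0 ≤ p) (a : ℝ) :
    HasDerivAt (slabProfile p) ((1 - a ^ 2) ^ p) a :=
  ((continuous_one_sub_sq_rpow hp).integral_hasStrictDerivAt 0 a).hasDerivAt

theorem slabProfile_le {p a : ℝ} (hp : 0 ≤ p) (ha : a ∈ Icc (0:ℝ) 1) : slabProfile p a ≤ a := by
  calc slabProfile p a ≤ ∫ _ in (0:ℝ)..a, (1:ℝ) :=
        intervalIntegral.integral_mono_on ha.1
          ((continuous_one_sub_sq_rpow hp).intervalIntegrable _ _) intervalIntegrable_const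
          fun y hy => rpow_le_one (by nlinarith [hy.1, hy.2, ha.2]) (by nlinarith) hp
    _ = a := by simp

theorem mul_le_slabProfile {p a : ℝ} (hp : 0 ≤ p) (ha : a ∈ Icc (0:ℝ) 1) :
    (3 / 4) ^ p / 2 * a ≤ slabProfile p a := by
  set b := min a (1 / 2)
  have hb0 : 0 ≤ b := le_min ha.1 (by norm_num)
  have hba : b ≤ a := min_le_left _ _
  calc (3 / 4) ^ p / 2 * a ≤ (3 / 4) ^ p * b := by
        have : a / 2 ≤ b := le_min (by linarith [ha.1]) (by linarith [ha.2])
        have : (0:ℝ) ≤ (3 / 4) ^ p := by positivity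
        nlinarith
    _ = ∫ _ in (0:ℝ)..b, (3 / 4 : ℝ) ^ p := by simp [mul_comm]
    _ ≤ ∫ y in (0:ℝ)..b, (1 - y ^ 2) ^ p :=
        intervalIntegral.integral_mono_on hb0 intervalIntegrable_const
          ((continuous_one_sub_sq_rpow hp).intervalIntegrable _ _) fun y hy =>
          rpow_le_rpow (by norm_num) (by nlinarith [hy.1, hy.2, min_le_right a (1 / 2)]) hp
    _ ≤ slabProfile p a :=
        intervalIntegral.integral_mono_interval le_rfl hb0 hba
          ((ae_restrict_iff' measurableSet_Ioc).2 (Eventually.of_forall fun y hy =>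
            rpow_nonneg (by nlinarith [hy.1, hy.2, ha.2]) p))
          ((continuous_one_sub_sq_rpow hp).intervalIntegrable _ _)

theorem mul_integral_comp_eq_integral_add {h h' g : ℝ → ℝ} {a b : ℝ} (θ : ℝ)
    (hh : ∀ x ∈ uIcc a b, HasDerivAt h (h' x) x) (hh' : ContinuousOn h' (uIcc a b))
    (hg : Continuous g) :
    θ * ∫ x in a..b, g (h x) = (∫ t in h a..h b, g t) + ∫ x in a..b, (θ - h' x) * g (h x) := by
  have hgh : ContinuousOn (fun x => g (h x)) (uIcc a b) :=
    hg.comp_continuousOn fun x hx => (hh x hx).continuousAt.continuousWithinAt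
  rw [← intervalIntegral.integral_comp_mul_deriv hh hh' hg, ← intervalIntegral.integral_const_mul,
    ← intervalIntegral.integral_add (f := fun x => (g ∘ h) x * h' x)
      (g := fun x => (θ - h' x) * g (h x)) (hgh.mul hh').intervalIntegrable
      ((continuousOn_const.sub hh').mul hgh).intervalIntegrable]
  congr 1 with x
  simp only [Function.comp_apply]
  ring

theorem integral_sq_mul_exp_neg_mul_le {c : ℝ} (hc : 0 < c) :
    ∫ a in (0:ℝ)..1, a ^ 2 * exp (-(c * a)) ≤ 16 / c ^ 3 := by
  have hpt : ∀ a ∈ Icc (0:ℝ) 1, a ^ 2 * exp (-(c * a)) ≤ 8 / c ^ 2 * exp (-(c / 2 * a)) := by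
    intro a ha
    have hsq : (c * a / 2) ^ 2 / 2 ≤ exp (c * a / 2) := by
      simpa using pow_div_factorial_le_exp (x := c * a / 2) (by nlinarith [ha.1]) 2
    have hsplit : exp (-(c / 2 * a)) = exp (c * a / 2) * exp (-(c * a)) := by
      rw [← exp_add]; ring_nf
    rw [hsplit, ← mul_assoc]
    gcongr
    rw [div_mul_eq_mul_div, le_div_iff₀ (by positivity)]
    nlinarith
  calc ∫ a in (0:ℝ)..1, a ^ 2 * exp (-(c * a))
      ≤ ∫ a in (0:ℝ)..1, 8 / c ^ 2 * exp (-(c / 2 * a)) :=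
        intervalIntegral.integral_mono_on zero_le_one
          (by apply Continuous.intervalIntegrable; fun_prop)
          (by apply Continuous.intervalIntegrable; fun_prop) hpt
    _ ≤ 8 / c ^ 2 * (1 / (c / 2)) := by
        rw [intervalIntegral.integral_const_mul]
        gcongr
        exact integral_exp_neg_mul_le (by positivity) 1
    _ = 16 / c ^ 3 := by field_simp; ring

noncomputable def laplaceIntegrand (s α : ℝ) (j : ℕ) (t : ℝ) : ℝ :=
  ((α + t) ^ j + j / s * (α + t) ^ (j - 1)) * exp (-(s * t))

theorem integral_laplaceIntegrand (s α T : ℝ) (j : ℕ) :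
    ∫ t in (0:ℝ)..T, laplaceIntegrand s α j t
      = laplacePow s α T j + j / s * laplacePow s α T (j - 1) := by
  rw [laplacePow, laplacePow, ← intervalIntegral.integral_const_mul,
    ← intervalIntegral.integral_add (by apply Continuous.intervalIntegrable; fun_prop)
      (by apply Continuous.intervalIntegrable; fun_prop)]
  congr 1 with t
  rw [laplaceIntegrand]
  ring

theorem abs_laplaceIntegrand_le {s : ℝ} (hs : 1 ≤ s) (α : ℝ) (j : ℕ) {t T : ℝ}
    (ht : t ∈ Icc 0 T) :
    |laplaceIntegrand s α j t| ≤ ((|α| + T) ^ j + j * (|α| + T) ^ (j - 1)) * exp (-(s * t)) := by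
  have hαt : |α + t| ≤ |α| + T :=
    (abs_add_le α t).trans (by rw [abs_of_nonneg ht.1]; linarith [ht.2])
  rw [laplaceIntegrand, abs_mul, abs_exp]
  gcongr
  refine (abs_add_le _ _).trans (add_le_add ?_ ?_)
  · rw [abs_pow]; gcongr
  · rw [abs_mul, abs_pow, abs_div, Nat.abs_cast, abs_of_pos (by linarith : 0 < s)]
    calc (j : ℝ) / s * |α + t| ^ (j - 1) ≤ j * |α + t| ^ (j - 1) := by
          gcongr; exact div_le_self (Nat.cast_nonneg j) hs
      _ ≤ j * (|α| + T) ^ (j - 1) := by gcongr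

theorem isBigO_integral_mul_laplaceIntegrand_comp {φ h : ℝ → ℝ} {c L T : ℝ} (hc : 0 < c)
    (hφ : Continuous φ) (hh : Continuous h) (hφL : ∀ a ∈ Icc (0:ℝ) 1, |φ a| ≤ L * a ^ 2)
    (hhc : ∀ a ∈ Icc (0:ℝ) 1, c * a ≤ h a) (hhT : ∀ a ∈ Icc (0:ℝ) 1, h a ≤ T) (α : ℝ) (j : ℕ) :
    (fun s => ∫ a in (0:ℝ)..1, φ a * laplaceIntegrand s α j (h a)) =O[atTop]
      fun s => s⁻¹ ^ 3 := by
  set M := (|α| + T) ^ j + j * (|α| + T) ^ (j - 1)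
  have hL : 0 ≤ L := by simpa using (abs_nonneg _).trans (hφL 1 ⟨zero_le_one, le_rfl⟩)
  have hM : 0 ≤ M := by
    have h1 : h 1 ∈ Icc 0 T := ⟨(mul_nonneg hc.le zero_le_one).trans (hhc 1 ⟨zero_le_one, le_rfl⟩),
      hhT 1 ⟨zero_le_one, le_rfl⟩⟩
    exact nonneg_of_mul_nonneg_left
      ((abs_nonneg _).trans (abs_laplaceIntegrand_le le_rfl α j h1)) (exp_pos _)
  refine IsBigO.of_bound (L * M * (16 / c ^ 3)) ?_
  filter_upwards [eventually_ge_atTop 1] with s hs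
  have hs0 : 0 < s := by linarith
  have hpt : ∀ a ∈ Icc (0:ℝ) 1, |φ a * laplaceIntegrand s α j (h a)|
      ≤ L * M * (a ^ 2 * exp (-(s * c * a))) := by
    intro a ha
    have hha : h a ∈ Icc 0 T := ⟨(mul_nonneg hc.le ha.1).trans (hhc a ha), hhT a ha⟩
    rw [abs_mul]
    calc |φ a| * |laplaceIntegrand s α j (h a)| ≤ (L * a ^ 2) * (M * exp (-(s * (h a)))) :=
          mul_le_mul (hφL a ha) (abs_laplaceIntegrand_le hs α j hha) (abs_nonneg _) (by positivity)
      _ ≤ (L * a ^ 2) * (M * exp (-(s * c * a))) := by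
          gcongr ?_ * (_ * exp ?_)
          rw [mul_assoc, neg_le_neg_iff]
          exact mul_le_mul_of_nonneg_left (hhc a ha) hs0.le
      _ = L * M * (a ^ 2 * exp (-(s * c * a))) := by ring
  rw [norm_eq_abs, norm_eq_abs, abs_pow, abs_inv, abs_of_pos hs0]
  calc |∫ a in (0:ℝ)..1, φ a * laplaceIntegrand s α j (h a)|
      ≤ ∫ a in (0:ℝ)..1, L * M * (a ^ 2 * exp (-(s * c * a))) :=
        (intervalIntegral.abs_integral_le_integral_abs zero_le_one).trans
          (intervalIntegral.integral_mono_on zero_le_one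
            (by apply Continuous.intervalIntegrable; unfold laplaceIntegrand; fun_prop)
            (by apply Continuous.intervalIntegrable; fun_prop) hpt)
    _ ≤ L * M * (16 / (s * c) ^ 3) := by
        rw [intervalIntegral.integral_const_mul]
        gcongr
        exact integral_sq_mul_exp_neg_mul_le (by positivity)
    _ = L * M * (16 / c ^ 3) * s⁻¹ ^ 3 := by field_simp

theorem pow_mul_one_add_div {x : ℝ} (hx : x ≠ 0) (s : ℝ) (j : ℕ) :
    x ^ j * (1 + j / (s * x)) = x ^ j + j / s * x ^ (j - 1) := by
  rcases j with _ | j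
  · simp
  · rw [Nat.add_sub_cancel, pow_succ]
    field_simp

theorem mul_integral_slab_eq {p θ α : ℝ} (hp : 0 ≤ p) (hθ : 0 ≤ θ) (hα : 0 < α) (s : ℝ) (j : ℕ) :
    θ * (∫ a in (0:ℝ)..1, exp (-(s * (θ * slabProfile p a)))
        * (α + θ * slabProfile p a) ^ j * (1 + j / (s * (α + θ * slabProfile p a))))
      = laplacePow s α (θ * slabProfile p 1) j
          + j / s * laplacePow s α (θ * slabProfile p 1) (j - 1)
        + ∫ a in (0:ℝ)..1, (θ - θ * (1 - a ^ 2) ^ p)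
          * laplaceIntegrand s α j (θ * slabProfile p a) := by
  have hintegrand : ∀ a ∈ uIcc (0:ℝ) 1, exp (-(s * (θ * slabProfile p a)))
      * (α + θ * slabProfile p a) ^ j * (1 + j / (s * (α + θ * slabProfile p a)))
      = laplaceIntegrand s α j (θ * slabProfile p a) := fun a ha => by
    rw [uIcc_of_le zero_le_one] at ha
    have hprofile : 0 ≤ slabProfile p a :=
      (mul_nonneg (by positivity) ha.1).trans (mul_le_slabProfile hp ha)
    have hpos : 0 < α + θ * slabProfile p a := by positivity
    rw [mul_assoc, mul_comm, pow_mul_one_add_div hpos.ne', laplaceIntegrand]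
  rw [intervalIntegral.integral_congr hintegrand,
    mul_integral_comp_eq_integral_add θ
      (fun a _ => (hasDerivAt_slabProfile hp a).const_mul θ)
      (continuous_const.mul (continuous_one_sub_sq_rpow hp)).continuousOn
      (by unfold laplaceIntegrand; fun_prop),
    slabProfile, intervalIntegral.integral_same, mul_zero, integral_laplaceIntegrand]

theorem isBigO_slab_integral_sub {p θ α : ℝ} (hp : 0 ≤ p) (hθ : 0 < θ) (hα : 0 < α) (j : ℕ) :
    (fun s => θ * (∫ a in (0:ℝ)..1, exp (-(s * (θ * slabProfile p a)))
        * (α + θ * slabProfile p a) ^ j * (1 + j / (s * (α + θ * slabProfile p a))))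
      - (α ^ j / s + 2 * j * α ^ (j - 1) / s ^ 2)) =O[atTop] fun s => s⁻¹ ^ 3 := by
  have hc : 0 < θ * ((3 / 4) ^ p / 2) := by positivity
  have hlow : ∀ a ∈ Icc (0:ℝ) 1, θ * ((3 / 4) ^ p / 2) * a ≤ θ * slabProfile p a := fun a ha => by
    rw [mul_assoc]; exact mul_le_mul_of_nonneg_left (mul_le_slabProfile hp ha) hθ.le
  have hT : 0 < θ * slabProfile p 1 :=
    (mul_pos hc one_pos).trans_le (hlow 1 ⟨zero_le_one, le_rfl⟩)
  have hrem := isBigO_integral_mul_laplaceIntegrand_comp (φ := fun a => θ - θ * (1 - a ^ 2) ^ p)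
    (h := fun a => θ * slabProfile p a)
    (L := θ * max p 1) (T := θ) hc (by have := continuous_one_sub_sq_rpow hp; fun_prop)
    (continuous_const.mul (continuous_iff_continuousAt.2 fun a =>
      (hasDerivAt_slabProfile hp a).continuousAt))
    (fun a ha => by
      rw [← mul_one_sub, abs_mul, abs_of_pos hθ, mul_assoc]
      exact mul_le_mul_of_nonneg_left (abs_one_sub_one_sub_rpow_le hp (sq_nonneg a)
        (by nlinarith [ha.1, ha.2])) hθ.le)
    hlow
    (fun a ha => mul_le_of_le_one_right hθ.le ((slabProfile_le hp ha).trans ha.2)) α j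
  refine ((isBigO_laplacePow_add_sub α hT j).add hrem).congr_left fun s => ?_
  rw [mul_integral_slab_eq hp hθ.le hα s j]
  ring

theorem ubv_pos (n : ℕ) : 0 < ubv n :=
  ENNReal.toReal_pos (measure_ball_pos volume 0 one_pos).ne' measure_ball_lt_top.ne

/-- as `s → ∞`,
`θ_{d-1} ∫_0^1 e^{-s h(a)} (α₀+h(a))^j (1 + j/(s(α₀+h(a)))) da
  = α₀^j s⁻¹ + 2 j α₀^{j-1} s⁻² + O(s^{ε-3})`. -/
theorem integral_exp_slab_asymptotics_corrected (d : ℕ) (hd : 2 ≤ d) (j : ℕ)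
    (α₀ : ℝ) (hα₀ : 0 < α₀) (ε : ℝ) (hε : ε ∈ Set.Ioo (0:ℝ) 1) :
    ∃ C s₀ : ℝ, ∀ s ≥ s₀,
      |ubv (d-1) * (∫ a in (0:ℝ)..1,
          Real.exp (-(s * hSlab d a)) * (α₀ + hSlab d a)^j
            * (1 + (j:ℝ) / (s * (α₀ + hSlab d a))))
        - (α₀^j / s + 2 * (j:ℝ) * α₀^(j-1) / s^2)| ≤ C * s ^ (ε - 3) := by
  have hp : 0 ≤ ((d:ℝ) - 1) / 2 := by
    have : (2:ℝ) ≤ d := by exact_mod_cast hd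
    linarith
  obtain ⟨C, hC, hbound⟩ := (isBigO_slab_integral_sub hp (ubv_pos (d - 1)) hα₀ j).exists_nonneg
  obtain ⟨s₀, hs₀⟩ := eventually_atTop.1 hbound.bound
  refine ⟨C, max s₀ 1, fun s hs => ?_⟩
  have hs1 : 1 ≤ s := le_of_max_le_right hs
  calc _ ≤ C * ‖s⁻¹ ^ 3‖ := hs₀ s (le_of_max_le_left hs)
    _ = C * s ^ (-3 : ℝ) := by
        rw [norm_pow, norm_inv, norm_eq_abs, abs_of_pos (by linarith), rpow_neg (by linarith)]
        norm_num
    _ ≤ C * s ^ (ε - 3) := by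
        gcongr
        linarith [hε.1]
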